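/- arXiv:1804.03442 — 3 statements merged into one kernel-verified Lean document; each statement's English description precedes it below -/
import Mathlib

section
/- Almost surely, the sample path t ↦ γ_t of the standard gamma process is strictly increasing on [0,∞): P-a.s., for all 0 ≤ s < t one has γ_s < γ_t. -/
open MeasureTheory ProbabilityTheory Real Set Filter

noncomputable section

/-- A standard gamma process on a probability space: starts at `0` a.s., has independent
increments, the increment over `[s, t]` is gamma-distributed with shape `t - s` and rate `1`,
and almost every sample path is right-continuous with left limits. -/
structure IsStdGammaProcess {Ω : Type*} [MeasurableSpace Ω] (P : Measure Ω)
    (γ : ℝ → Ω → ℝ) : Prop where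
  measurable : ∀ t : ℝ, Measurable (γ t)
  zero : ∀ᵐ ω ∂P, γ 0 ω = 0
  indep_incr : ∀ (n : ℕ) (t : Fin (n + 1) → ℝ), Monotone t → (∀ i, 0 ≤ t i) →
    iIndepFun
      (fun i : Fin n => fun ω => γ (t i.succ) ω - γ (t i.castSucc) ω) P
  incr_law : ∀ s t : ℝ, 0 ≤ s → s < t →
    P.map (fun ω => γ t ω - γ s ω) = gammaMeasure (t - s) 1
  cadlag : ∀ᵐ ω ∂P,
    (∀ t : ℝ, 0 ≤ t → ContinuousWithinAt (fun s => γ s ω) (Set.Ici t) t) ∧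
    (∀ t : ℝ, 0 < t → ∃ l : ℝ, Tendsto (fun s => γ s ω) (nhdsWithin t (Set.Iio t)) (nhds l))

/-!
A gamma-distributed increment is almost surely positive, so almost surely the path is strictly
increasing along the (countably many) pairs of nonnegative rationals. Right-continuity then
squeezes every real pair `s < t` between rationals `s < q₁ < q₂ < t`:
`γ_s ≤ γ_{q₁} < γ_{q₂} ≤ γ_t`, the outer inequalities being limits of rational ones from the
right.
-/

theorem ContinuousWithinAt.mem_of_forall_rat_mem_Ioo {X : Type*} [TopologicalSpace X]
    {f : ℝ → X} {s b : ℝ} {C : Set X} (hf : ContinuousWithinAt f (Ici s) s) (hC : IsClosed C)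
    (hsb : s < b) (h : ∀ q : ℚ, s < q → (q : ℝ) < b → f q ∈ C) : f s ∈ C := by
  set A := Ioo s b ∩ range ((↑) : ℚ → ℝ)
  have hsA : s ∈ closure A :=
    closure_minimal (Rat.denseRange_cast.open_subset_closure_inter isOpen_Ioo) isClosed_closure
      ((closure_Ioo hsb.ne).symm ▸ left_mem_Icc.2 hsb.le)
  have hfA : MapsTo f A C := by
    rintro _ ⟨⟨hs, hb⟩, q, rfl⟩
    exact h q hs hb
  exact hC.closure_subset ((hf.mono fun x hx => hx.1.1.le).mem_closure hsA hfA)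

theorem strictMonoOn_Ici_of_continuousWithinAt_of_rat {f : ℝ → ℝ} {a : ℝ}
    (hf : ∀ t, a ≤ t → ContinuousWithinAt f (Ici t) t)
    (hq : ∀ q r : ℚ, a ≤ q → (q : ℝ) < r → f q < f r) : StrictMonoOn f (Ici a) := by
  intro s hs t ht hst
  obtain ⟨q₁, hsq₁, hq₁t⟩ := exists_rat_btwn hst
  obtain ⟨q₂, hq₁₂, hq₂t⟩ := exists_rat_btwn hq₁t
  have hq₁ : a ≤ q₁ := hs.trans hsq₁.le
  calc f s ≤ f q₁ := (hf s hs).mem_of_forall_rat_mem_Ioo isClosed_Iic hsq₁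
        fun q hsq hqq₁ => (hq q q₁ (hs.trans hsq.le) hqq₁).le
    _ < f q₂ := hq q₁ q₂ hq₁ hq₁₂
    _ ≤ f t := (hf t ht).mem_of_forall_rat_mem_Ioo isClosed_Ici (lt_add_one t)
        fun q htq _ => (hq q₂ q (hq₁.trans hq₁₂.le) (hq₂t.trans htq)).le

theorem ae_pos_gammaMeasure (a r : ℝ) : ∀ᵐ x ∂gammaMeasure a r, 0 < x := by
  rw [gammaMeasure, ae_withDensity_iff
    (show Measurable (gammaPDF a r) from (measurable_gammaPDFReal a r).ennreal_ofReal)]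
  filter_upwards [(countable_singleton (0 : ℝ)).ae_notMem volume] with x hx0 hx
  exact lt_of_le_of_ne (not_lt.1 (mt gammaPDF_of_neg hx)) (Ne.symm hx0)

theorem ae_pos_of_map_eq_gammaMeasure {Ω : Type*} [MeasurableSpace Ω] {P : Measure Ω}
    {X : Ω → ℝ} {a r : ℝ} (hX : AEMeasurable X P) (hlaw : P.map X = gammaMeasure a r) :
    ∀ᵐ ω ∂P, 0 < X ω :=
  ae_of_ae_map hX (hlaw ▸ ae_pos_gammaMeasure a r)

namespace IsStdGammaProcess

variable {Ω : Type*} [MeasurableSpace Ω] {P : Measure Ω} {γ : ℝ → Ω → ℝ}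

theorem ae_lt (hγ : IsStdGammaProcess P γ) {s t : ℝ} (hs : 0 ≤ s) (hst : s < t) :
    ∀ᵐ ω ∂P, γ s ω < γ t ω := by
  have hincr : AEMeasurable (fun ω => γ t ω - γ s ω) P :=
    ((hγ.measurable t).sub (hγ.measurable s)).aemeasurable
  filter_upwards [ae_pos_of_map_eq_gammaMeasure hincr (hγ.incr_law s t hs hst)] with ω hω
  exact sub_pos.1 hω

theorem ae_lt_rat (hγ : IsStdGammaProcess P γ) :
    ∀ᵐ ω ∂P, ∀ q r : ℚ, (0 : ℝ) ≤ q → (q : ℝ) < r → γ q ω < γ r ω := by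
  refine ae_all_iff.2 fun q => ae_all_iff.2 fun r => ?_
  by_cases h : (0 : ℝ) ≤ q ∧ (q : ℝ) < r
  · filter_upwards [hγ.ae_lt h.1 h.2] with ω hω _ _ using hω
  · exact Eventually.of_forall fun ω hq hqr => (h ⟨hq, hqr⟩).elim

end IsStdGammaProcess

theorem gamma_process_strictMono_general
    {Ω : Type*} [MeasurableSpace Ω] (P : Measure Ω)
    (γ : ℝ → Ω → ℝ) (hγ : IsStdGammaProcess P γ) :
    ∀ᵐ ω ∂P, ∀ s t : ℝ, 0 ≤ s → s < t → γ s ω < γ t ω := by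
  filter_upwards [hγ.ae_lt_rat, hγ.cadlag] with ω hrat hcadlag s t hs hst
  exact strictMonoOn_Ici_of_continuousWithinAt_of_rat hcadlag.1 hrat hs (hs.trans hst.le) hst

/-- Almost surely, the sample path `t ↦ γ_t` of a standard gamma process is
strictly increasing on `[0, ∞)`. -/
theorem gamma_process_strictMono
    {Ω : Type*} [MeasurableSpace Ω] (P : Measure Ω) [IsProbabilityMeasure P]
    (γ : ℝ → Ω → ℝ) (hγ : IsStdGammaProcess P γ) :
    ∀ᵐ ω ∂P, ∀ s t : ℝ, 0 ≤ s → s < t → γ s ω < γ t ω :=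
  gamma_process_strictMono_general P γ hγ
end
end

section
/- For any r > 0 and any partition 0 = t_0 < t_1 < ⋯ < t_n = r, the random vector of increments (ζ^r_{t_1} − ζ^r_{t_0}, ζ^r_{t_2} − ζ^r_{t_1}, …, ζ^r_{t_n} − ζ^r_{t_{n−1}}) is independent of the random variable γ_r. -/
open MeasureTheory ProbabilityTheory Real Set Filter

noncomputable section

open scoped ENNReal

/-!
The bridge increments are `J / ∑ J`, where `J_i = γ_{t_{i+1}} - γ_{t_i}` are independent with laws
`Γ(t_{i+1} - t_i, 1)`, and `∑ J = γ_r`. So it suffices that for independent gamma variables of a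
common rate, the normalised vector `J / ∑ J` is independent of `∑ J` (which is again gamma).
For two variables this is the beta–gamma algebra: substituting `x = s u`, `y = s (1 - u)`, of
Jacobian `s`, turns the product of the `Γ(a)` and `Γ(b)` densities into the `Beta(a, b)` density
in `u` times the `Γ(a + b)` density in `s`. The general case follows by induction, splitting off
the first coordinate `x₀` and applying the two-variable case to `x₀` and the sum of the others.
-/

theorem lintegral_eq_ofReal_abs_mul_lintegral_comp_mul {c : ℝ} (hc : c ≠ 0) (f : ℝ → ℝ≥0∞) :
    ∫⁻ x, f x = ENNReal.ofReal |c| * ∫⁻ u, f (c * u) := by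
  have := lintegral_map_equiv (μ := volume) f (MeasurableEquiv.mulLeft₀ c hc)
  rw [MeasurableEquiv.coe_mulLeft₀, map_volume_mul_left hc, lintegral_smul_measure,
    smul_eq_mul] at this
  rw [← this, ← mul_assoc, ← ENNReal.ofReal_mul (abs_nonneg c), abs_inv,
    mul_inv_cancel₀ (abs_ne_zero.2 hc), ENNReal.ofReal_one, one_mul]

theorem inv_add_smul_eq_cons {n : ℕ} (x : Fin (n + 2) → ℝ) {S : ℝ} (hS : S ≠ 0)
    (hS₀ : S + x 0 ≠ 0) :
    (S + x 0)⁻¹ • x = Fin.cons (1 - S / (S + x 0)) ((S / (S + x 0)) • S⁻¹ • Fin.tail x) := by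
  ext i
  refine Fin.cases ?_ (fun j => ?_) i
  · simp only [Pi.smul_apply, smul_eq_mul, Fin.cons_zero]
    field_simp
    ring
  · simp only [Pi.smul_apply, smul_eq_mul, Fin.cons_succ, Fin.tail]
    field_simp

namespace ProbabilityTheory

@[fun_prop]
theorem measurable_gammaPDF (a r : ℝ) : Measurable (gammaPDF a r) :=
  (measurable_gammaPDFReal a r).ennreal_ofReal

@[fun_prop]
theorem measurable_betaPDF (a b : ℝ) : Measurable (betaPDF a b) :=
  (measurable_betaPDFReal a b).ennreal_ofReal

theorem ae_pos_gammaMeasure (a r : ℝ) : ∀ᵐ x ∂gammaMeasure a r, 0 < x := by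
  rw [gammaMeasure, ae_withDensity_iff (measurable_gammaPDF a r)]
  filter_upwards [Measure.ae_ne volume (0 : ℝ)] with x hx₀ hx
  exact lt_of_le_of_ne (not_lt.1 fun h => hx (gammaPDF_of_neg h)) hx₀.symm

theorem gammaPDF_mul_gammaPDF_eq_gammaPDF_mul_betaPDF {a b r s u : ℝ} (ha : 0 < a) (hb : 0 < b)
    (hr : 0 < r) (hs : 0 < s) (hu₀ : u ≠ 0) (hu₁ : u ≠ 1) :
    ENNReal.ofReal s * (gammaPDF a r (s * u) * gammaPDF b r (s - s * u)) =
      gammaPDF (a + b) r s * betaPDF a b u := by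
  rcases hu₀.lt_or_gt with hu | hu
  · rw [gammaPDF_of_neg (mul_neg_of_pos_of_neg hs hu), betaPDF_eq_zero_of_nonpos hu.le]
    simp
  rcases hu₁.lt_or_gt with hu' | hu'
  · have hΓa := (Gamma_pos_of_pos ha).ne'
    have hΓb := (Gamma_pos_of_pos hb).ne'
    have hΓab := (Gamma_pos_of_pos (add_pos ha hb)).ne'
    rw [gammaPDF_of_nonneg (by positivity), gammaPDF_of_nonneg (by nlinarith),
      gammaPDF_of_nonneg hs.le, betaPDF_of_pos_lt_one hu hu', ← ENNReal.ofReal_mul (by positivity),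
      ← ENNReal.ofReal_mul hs.le, ← ENNReal.ofReal_mul (by positivity)]
    congr 1
    rw [show s - s * u = s * (1 - u) by ring, mul_rpow hs.le hu.le,
      mul_rpow hs.le (sub_nonneg.2 hu'.le), rpow_add hr, beta,
      show a + b - 1 = (a - 1) + (b - 1) + 1 by ring, rpow_add hs, rpow_add hs, rpow_one,
      show -(r * s) = -(r * (s * u)) + -(r * (s * (1 - u))) by ring, exp_add]
    field_simp
  · rw [gammaPDF_of_neg (by nlinarith : s - s * u < 0), betaPDF_eq_zero_of_one_le hu'.le]
    simp

theorem lintegral_gammaPDF_mul_gammaPDF_sub {a b r s : ℝ} (ha : 0 < a) (hb : 0 < b) (hr : 0 < r)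
    (hs : s ≠ 0) (g : ℝ → ℝ≥0∞) :
    ∫⁻ x, gammaPDF a r x * gammaPDF b r (s - x) * g (x / s) =
      gammaPDF (a + b) r s * ∫⁻ u, betaPDF a b u * g u := by
  rcases hs.lt_or_gt with hs | hs
  · have hzero (x : ℝ) : gammaPDF a r x * gammaPDF b r (s - x) = 0 := by
      rcases lt_or_ge x 0 with hx | hx
      · rw [gammaPDF_of_neg hx, zero_mul]
      · rw [gammaPDF_of_neg (by linarith : s - x < 0), mul_zero]
    simp [hzero, gammaPDF_of_neg hs]
  calc ∫⁻ x, gammaPDF a r x * gammaPDF b r (s - x) * g (x / s)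
      = ∫⁻ u, ENNReal.ofReal s *
          (gammaPDF a r (s * u) * gammaPDF b r (s - s * u)) * g u := by
        rw [lintegral_eq_ofReal_abs_mul_lintegral_comp_mul hs.ne', abs_of_pos hs,
          ← lintegral_const_mul' _ _ ENNReal.ofReal_ne_top]
        simp only [mul_div_cancel_left₀ _ hs.ne', mul_assoc]
    _ = ∫⁻ u, gammaPDF (a + b) r s * (betaPDF a b u * g u) := by
        refine lintegral_congr_ae ?_
        filter_upwards [Measure.ae_ne volume 0, Measure.ae_ne volume 1] with u hu₀ hu₁
        rw [gammaPDF_mul_gammaPDF_eq_gammaPDF_mul_betaPDF ha hb hr hs hu₀ hu₁, mul_assoc]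
    _ = gammaPDF (a + b) r s * ∫⁻ u, betaPDF a b u * g u :=
        lintegral_const_mul' _ _ ENNReal.ofReal_ne_top

theorem measurePreserving_div_add_add_gammaMeasure {a b r : ℝ} (ha : 0 < a) (hb : 0 < b)
    (hr : 0 < r) :
    MeasurePreserving (fun p : ℝ × ℝ => (p.1 / (p.1 + p.2), p.1 + p.2))
      ((gammaMeasure a r).prod (gammaMeasure b r))
      ((betaMeasure a b).prod (gammaMeasure (a + b) r)) := by
  have hT : Measurable fun p : ℝ × ℝ => (p.1 / (p.1 + p.2), p.1 + p.2) := by fun_prop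
  refine ⟨hT, Measure.ext fun S hS => ?_⟩
  set F : ℝ × ℝ → ℝ≥0∞ := S.indicator 1
  have hF : Measurable F := measurable_one.indicator hS
  rw [← lintegral_indicator_one hS, lintegral_map hF hT, ← lintegral_indicator_one hS,
    gammaMeasure, gammaMeasure, betaMeasure, gammaMeasure, prod_withDensity (measurable_gammaPDF a r) (measurable_gammaPDF b r),
    prod_withDensity (measurable_betaPDF a b) (measurable_gammaPDF _ r),
    lintegral_withDensity_eq_lintegral_mul _ (by fun_prop) (by fun_prop),
    lintegral_withDensity_eq_lintegral_mul _ (by fun_prop) hF, lintegral_prod _ (by fun_prop),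
    lintegral_prod_symm _ (by fun_prop)]
  calc ∫⁻ x, ∫⁻ y, gammaPDF a r x * gammaPDF b r y * F (x / (x + y), x + y)
      = ∫⁻ x, ∫⁻ s, gammaPDF a r x * gammaPDF b r (s - x) * F (x / s, s) := by
        refine lintegral_congr fun x => ?_
        rw [← lintegral_add_left_eq_self
          (fun s => gammaPDF a r x * gammaPDF b r (s - x) * F (x / s, s)) x]
        simp only [add_sub_cancel_left]
    _ = ∫⁻ s, ∫⁻ x, gammaPDF a r x * gammaPDF b r (s - x) * F (x / s, s) :=
        lintegral_lintegral_swap (by fun_prop)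
    _ = ∫⁻ s, ∫⁻ u, betaPDF a b u * gammaPDF (a + b) r s * F (u, s) := by
        refine lintegral_congr_ae ?_
        filter_upwards [Measure.ae_ne volume 0] with s hs
        rw [lintegral_gammaPDF_mul_gammaPDF_sub ha hb hr hs (fun u => F (u, s)),
          ← lintegral_const_mul' (gammaPDF (a + b) r s) _ ENNReal.ofReal_ne_top]
        simp only [mul_left_comm, mul_assoc]

theorem HasLaw.indepFun_fst_snd {Ω α β : Type*} {mΩ : MeasurableSpace Ω}
    {mα : MeasurableSpace α} {mβ : MeasurableSpace β} {P : Measure Ω} {X : Ω → α × β}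
    {μ : Measure α} {ν : Measure β} [IsProbabilityMeasure μ] [IsProbabilityMeasure ν]
    (h : HasLaw X (μ.prod ν) P) :
    IndepFun (fun ω => (X ω).1) (fun ω => (X ω).2) P :=
  have := h.isProbabilityMeasure
  (indepFun_iff_hasLaw_prodMk_prod (measurePreserving_fst.fun_comp_hasLaw h)
    (measurePreserving_snd.fun_comp_hasLaw h)).2 h

theorem hasLaw_smul_sum_pi_gammaMeasure_one {a : Fin 1 → ℝ} {r : ℝ} (ha : 0 < a 0) (hr : 0 < r) :
    HasLaw (fun x => ((∑ i, x i)⁻¹ • x, ∑ i, x i))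
      ((Measure.dirac 1).prod (gammaMeasure (∑ i, a i) r))
      (Measure.pi fun i => gammaMeasure (a i) r) := by
  have := isProbabilityMeasure_gammaMeasure ha hr
  have hμ : (Measure.pi fun i => gammaMeasure (a i) r) =
      Measure.pi fun _ => gammaMeasure (a 0) r := by
    congr with i
    rw [Fin.fin_one_eq_zero i]
  rw [Fin.sum_univ_one, Measure.dirac_prod, hμ]
  refine (HasLaw.fun_comp (Y := Prod.mk 1) ⟨by fun_prop, rfl⟩
    (measurePreserving_funUnique (gammaMeasure (a 0) r) (Fin 1)).hasLaw).congr ?_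
  filter_upwards [(Measure.tendsto_eval_ae_ae (i := 0)).eventually
    (ae_pos_gammaMeasure (a 0) r)] with x (hx : 0 < x 0)
  have hx_const : x = fun _ => x 0 := funext fun i => by rw [Fin.fin_one_eq_zero i]
  rw [hx_const]
  ext <;> simp [hx.ne']

theorem hasLaw_smul_sum_pi_gammaMeasure_succ {n : ℕ} {a : Fin (n + 2) → ℝ} {r : ℝ}
    (ha : ∀ i, 0 < a i) (hr : 0 < r) {ν : Measure (Fin (n + 1) → ℝ)} [IsProbabilityMeasure ν]
    (hν : HasLaw (fun y => ((∑ j, y j)⁻¹ • y, ∑ j, y j))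
      (ν.prod (gammaMeasure (∑ j : Fin (n + 1), a j.succ) r))
      (Measure.pi fun j => gammaMeasure (a j.succ) r)) :
    HasLaw (fun x => ((∑ i, x i)⁻¹ • x, ∑ i, x i))
      (((ν.prod (betaMeasure (∑ j : Fin (n + 1), a j.succ) (a 0))).map
        fun p => (Fin.cons (1 - p.2) (p.2 • p.1) : Fin (n + 2) → ℝ)).prod
        (gammaMeasure (∑ i, a i) r))
      (Measure.pi fun i => gammaMeasure (a i) r) := by
  set A := ∑ j : Fin (n + 1), a j.succ
  have hA : 0 < A := Finset.sum_pos (fun j _ => ha j.succ) Finset.univ_nonempty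
  have := isProbabilityMeasure_gammaMeasure (ha 0) hr
  have := isProbabilityMeasure_gammaMeasure hA hr
  have := isProbabilityMeasure_gammaMeasure (add_pos hA (ha 0)) hr
  have := isProbabilityMeasureBeta hA (ha 0)
  have (i : Fin (n + 2)) := isProbabilityMeasure_gammaMeasure (ha i) hr
  have he : MeasurePreserving (MeasurableEquiv.piFinSuccAbove (fun _ => ℝ) 0)
      (Measure.pi fun i => gammaMeasure (a i) r)
      ((gammaMeasure (a 0) r).prod (Measure.pi fun j => gammaMeasure (a j.succ) r)) := by
    simpa only [Fin.succAbove_zero] using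
      measurePreserving_piFinSuccAbove (fun i => gammaMeasure (a i) r) 0
  -- Read from the bottom: with `y` the tail of `x` and `S = ∑ y`, the chain is
  -- `x ↦ (y, x₀) ↦ ((y / S, S), x₀) ↦ (y / S, (S, x₀)) ↦ (y / S, (S / (S + x₀), S + x₀)) ↦ ⋯`,
  -- which is `(x / ∑ x, ∑ x)` as soon as `S` and `x₀` are positive.
  have hchain := (MeasurePreserving.prod (μb := (ν.prod (betaMeasure A (a 0))).map
      fun p => (Fin.cons (1 - p.2) (p.2 • p.1) : Fin (n + 2) → ℝ)) ⟨by fun_prop, rfl⟩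
      (MeasurePreserving.id (gammaMeasure (A + a 0) r))).comp <|
    (measurePreserving_prodAssoc ν _ _).symm.comp <|
    ((MeasurePreserving.id ν).prod
      (measurePreserving_div_add_add_gammaMeasure hA (ha 0) hr)).comp <|
    (measurePreserving_prodAssoc ν _ _).comp <|
    ((hν.measurePreserving (by fun_prop)).prod (MeasurePreserving.id _)).comp <|
    Measure.measurePreserving_swap.comp he
  rw [Fin.sum_univ_succ, add_comm (a 0)]
  refine hchain.hasLaw.congr ?_
  filter_upwards [ae_all_iff.2 fun i => (Measure.tendsto_eval_ae_ae (i := i)).eventually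
    (ae_pos_gammaMeasure (a i) r)] with x hx
  have hS : 0 < ∑ j : Fin (n + 1), x j.succ :=
    Finset.sum_pos (fun j _ => hx j.succ) Finset.univ_nonempty
  have hsum : ∑ i, x i = ∑ j : Fin (n + 1), x j.succ + x 0 := by rw [Fin.sum_univ_succ, add_comm]
  simp only [hsum, MeasurableEquiv.prodAssoc, MeasurableEquiv.symm_mk, MeasurableEquiv.coe_mk,
    MeasurableEquiv.piFinSuccAbove_apply, Fin.insertNthEquiv_zero, Function.comp_apply,
    Fin.consEquiv_symm_apply, Prod.swap_prod_mk, Prod.map_apply, id_eq, Equiv.prodAssoc_apply,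
    Equiv.prodAssoc_symm_apply, Prod.mk.injEq, Fin.tail, and_true]
  exact inv_add_smul_eq_cons x hS.ne' (add_pos hS (hx 0)).ne'

theorem exists_hasLaw_smul_sum_pi_gammaMeasure {n : ℕ} {a : Fin (n + 1) → ℝ} {r : ℝ}
    (ha : ∀ i, 0 < a i) (hr : 0 < r) :
    ∃ ν : Measure (Fin (n + 1) → ℝ), IsProbabilityMeasure ν ∧
      HasLaw (fun x => ((∑ i, x i)⁻¹ • x, ∑ i, x i)) (ν.prod (gammaMeasure (∑ i, a i) r))
        (Measure.pi fun i => gammaMeasure (a i) r) := by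
  induction n with
  | zero => exact ⟨_, inferInstance, hasLaw_smul_sum_pi_gammaMeasure_one (ha 0) hr⟩
  | succ n ih =>
    obtain ⟨ν, hν, hlaw⟩ := ih fun j => ha j.succ
    have := isProbabilityMeasureBeta
      (Finset.sum_pos (fun (j : Fin (n + 1)) _ => ha j.succ) Finset.univ_nonempty) (ha 0)
    exact ⟨_, Measure.isProbabilityMeasure_map (by fun_prop),
      hasLaw_smul_sum_pi_gammaMeasure_succ ha hr hlaw⟩

end ProbabilityTheory

theorem Fin.sum_succ_sub_castSucc {M : Type*} [AddCommGroup M] {n : ℕ} (f : Fin (n + 1) → M) :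
    ∑ i : Fin n, (f i.succ - f i.castSucc) = f (Fin.last n) - f 0 := by
  rw [Finset.sum_sub_distrib, sub_eq_sub_iff_add_eq_add, add_comm _ (f 0), ← Fin.sum_univ_succ,
    Fin.sum_univ_castSucc, add_comm]

theorem gamma_bridge_increments_indep_of_endpoint_general
    {Ω : Type*} [MeasurableSpace Ω] (P : Measure Ω) [IsProbabilityMeasure P]
    (γ : ℝ → Ω → ℝ) (hγ : IsStdGammaProcess P γ) (r : ℝ)
    (ζ : ℝ → Ω → ℝ) (hζ : ∀ t ω, ζ t ω = γ (min t r) ω / γ r ω)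
    (n : ℕ) (t : Fin (n + 1) → ℝ) (hmono : StrictMono t)
    (h0 : t 0 = 0) (hlast : t (Fin.last n) = r) :
    IndepFun (fun ω => fun i : Fin n => ζ (t i.succ) ω - ζ (t i.castSucc) ω) (γ r) P := by
  rcases n with _ | n
  · exact (indepFun_const_left (fun i : Fin 0 => (0 : ℝ)) (γ r)).congr
      (ae_of_all _ fun _ => Subsingleton.elim _ _) (ae_of_all _ fun _ => rfl)
  have ht_nonneg (i) : 0 ≤ t i := h0 ▸ hmono.monotone (Fin.zero_le i)
  have ht_le (i) : t i ≤ r := hlast ▸ hmono.monotone (Fin.le_last i)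
  have hincr (i : Fin (n + 1)) : t i.castSucc < t i.succ := hmono i.castSucc_lt_succ
  let J (ω : Ω) (i : Fin (n + 1)) : ℝ := γ (t i.succ) ω - γ (t i.castSucc) ω
  have hJ : HasLaw J (Measure.pi fun i => gammaMeasure (t i.succ - t i.castSucc) 1) P :=
    (hγ.indep_incr _ t hmono.monotone ht_nonneg).hasLaw_pi fun i =>
      ⟨((hγ.measurable _).sub (hγ.measurable _)).aemeasurable,
        hγ.incr_law _ _ (ht_nonneg _) (hincr i)⟩
  obtain ⟨ν, hν, hT⟩ :=
    exists_hasLaw_smul_sum_pi_gammaMeasure (fun i => sub_pos.2 (hincr i)) one_pos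
  have := isProbabilityMeasure_gammaMeasure
    (Finset.sum_pos (fun i _ => sub_pos.2 (hincr i)) Finset.univ_nonempty) one_pos
  have hsum : ∀ᵐ ω ∂P, ∑ i, J ω i = γ r ω := by
    filter_upwards [hγ.zero] with ω hω
    rw [Fin.sum_succ_sub_castSucc (fun k => γ (t k) ω), hlast, h0, hω, sub_zero]
  refine (hT.fun_comp hJ).indepFun_fst_snd.congr ?_ hsum
  filter_upwards [hsum] with ω hω
  funext i
  simp only [hζ, min_eq_left (ht_le _), ← hω, Pi.smul_apply, smul_eq_mul, J]
  ring

/-- For `r > 0` and any partition `0 = t_0 < t_1 < ⋯ < t_n = r`, the vector of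
increments `(ζ^r_{t_1} - ζ^r_{t_0}, …, ζ^r_{t_n} - ζ^r_{t_{n-1}})` of the gamma bridge
`ζ^r_t = γ_{t ∧ r}/γ_r` is independent of the random variable `γ_r`. -/
theorem gamma_bridge_increments_indep_of_endpoint
    {Ω : Type*} [MeasurableSpace Ω] (P : Measure Ω) [IsProbabilityMeasure P]
    (γ : ℝ → Ω → ℝ) (hγ : IsStdGammaProcess P γ) (r : ℝ) (hr : 0 < r)
    (ζ : ℝ → Ω → ℝ) (hζ : ∀ t ω, ζ t ω = γ (min t r) ω / γ r ω)
    (n : ℕ) (t : Fin (n + 1) → ℝ) (hmono : StrictMono t)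
    (h0 : t 0 = 0) (hlast : t (Fin.last n) = r) :
    IndepFun (fun ω => fun i : Fin n => ζ (t i.succ) ω - ζ (t i.castSucc) ω) (γ r) P :=
  gamma_bridge_increments_indep_of_endpoint_general P γ hγ r ζ hζ n t hmono h0 hlast
end
end

section
/- For every r > 0, the gamma bridge ζ^r is a Markov process with respect to its natural filtration: for every bounded measurable g : ℝ → ℝ and all 0 ≤ t < u ≤ r, E[g(ζ^r_u) | σ(ζ^r_s, s ≤ t)] = E[g(ζ^r_u) | σ(ζ^r_t)] P-a.s. -/
open MeasureTheory ProbabilityTheory Real Set Filter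

noncomputable section

/-!
Fix `0 ≤ t < u < r` and put `W = γ u - γ t`, `Z = γ r - γ u`, `B = W / (W + Z)`. Then
`ζ u = ζ t + (1 - ζ t) * B`, and for `s ≤ t` we have `ζ s = γ s / (γ t + (W + Z))`, so the past of
the bridge up to time `t` is a function of the past of `γ` and of `W + Z`. The past of `γ` is
independent of `(W, Z)` by independence of increments, and `W + Z` is independent of `B` by the
beta–gamma algebra: for independent `X ~ Γ(a)`, `Y ~ Γ(c)` the pair `(X + Y, X / (X + Y))` has law
`Γ(a + c) ⊗ Beta(a, c)`, which is the change of variables `(s, b) ↦ (s b, s (1 - b))`. Hence `B`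
is independent of the whole past of `ζ`, and conditioning `g (ζ u)` on either σ-algebra gives
`H (ζ t)` with `H x = E[g (x + (1 - x) B)]`. For `u = r` the bridge is pinned at `ζ r = 1`.
-/

open scoped ENNReal NNReal

namespace MeasureTheory

theorem withDensity_restrict_image_map_of_leftInvOn {E : Type*} [NormedAddCommGroup E]
    [NormedSpace ℝ E] [FiniteDimensional ℝ E] [MeasurableSpace E] [BorelSpace E] (μ : Measure E)
    [μ.IsAddHaarMeasure] {s : Set E} {Ψ Φ : E → E} {Ψ' : E → E →L[ℝ] E}
    (hs : MeasurableSet s) (hΨ' : ∀ x ∈ s, HasFDerivWithinAt Ψ (Ψ' x) s x)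
    (hΦ : Measurable Φ) (hΦΨ : LeftInvOn Φ Ψ s) (f : E → ℝ≥0∞) :
    ((μ.restrict (Ψ '' s)).withDensity f).map Φ
      = (μ.restrict s).withDensity fun x => ENNReal.ofReal |(Ψ' x).det| * f (Ψ x) := by
  ext A hA
  rw [Measure.map_apply hΦ hA, withDensity_apply _ (hΦ hA), withDensity_apply _ hA,
    ← lintegral_indicator (hΦ hA), ← lintegral_indicator hA,
    lintegral_image_eq_lintegral_abs_det_fderiv_mul μ hs hΨ' hΦΨ.injOn]
  refine setLIntegral_congr_fun hs fun x hx => ?_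
  by_cases hxA : x ∈ A
  · have : Ψ x ∈ Φ ⁻¹' A := by rwa [mem_preimage, hΦΨ hx]
    simp [indicator_of_mem hxA, indicator_of_mem this]
  · have : Ψ x ∉ Φ ⁻¹' A := by rwa [mem_preimage, hΦΨ hx]
    simp [indicator_of_notMem hxA, indicator_of_notMem this]

end MeasureTheory

lemma hasFDerivAt_mul_mul_one_sub (p : ℝ × ℝ) :
    HasFDerivAt (fun q : ℝ × ℝ => (q.1 * q.2, q.1 * (1 - q.2)))
      (LinearMap.toContinuousLinearMap (Matrix.toLin (Module.Basis.finTwoProd ℝ)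
        (Module.Basis.finTwoProd ℝ) !![p.2, p.1; 1 - p.2, -p.1])) p := by
  have h₁ : HasFDerivAt (fun q : ℝ × ℝ => q.1 * q.2)
      (p.1 • ContinuousLinearMap.snd ℝ ℝ ℝ + p.2 • ContinuousLinearMap.fst ℝ ℝ ℝ) p :=
    hasFDerivAt_fst.mul hasFDerivAt_snd
  have h₂ : HasFDerivAt (fun q : ℝ × ℝ => q.1 * (1 - q.2))
      (p.1 • -ContinuousLinearMap.snd ℝ ℝ ℝ + (1 - p.2) • ContinuousLinearMap.fst ℝ ℝ ℝ) p :=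
    hasFDerivAt_fst.mul (hasFDerivAt_snd.const_sub 1)
  rw [Matrix.toLin_finTwoProd_toContinuousLinearMap, add_comm (p.2 • _),
    add_comm ((1 - p.2) • _)]
  rw [smul_neg, ← neg_smul] at h₂
  exact h₁.prodMk h₂

lemma det_toLin_finTwoProd (a b c d : ℝ) :
    (LinearMap.toContinuousLinearMap (Matrix.toLin (Module.Basis.finTwoProd ℝ)
      (Module.Basis.finTwoProd ℝ) !![a, b; c, d])).det = a * d - b * c := by
  simp only [ContinuousLinearMap.det, LinearMap.coe_toContinuousLinearMap, LinearMap.det_toLin,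
    Matrix.det_fin_two_of]

lemma leftInvOn_add_div_mul_mul_one_sub :
    LeftInvOn (fun p : ℝ × ℝ => (p.1 + p.2, p.1 / (p.1 + p.2)))
      (fun q : ℝ × ℝ => (q.1 * q.2, q.1 * (1 - q.2))) (Ioi 0 ×ˢ Ioo 0 1) := by
  rintro ⟨s, b⟩ ⟨hs, -⟩
  have hs : s ≠ 0 := ne_of_gt hs
  simp only [Prod.mk.injEq]
  constructor
  · ring
  · field_simp; ring

lemma image_mul_mul_one_sub :
    (fun q : ℝ × ℝ => (q.1 * q.2, q.1 * (1 - q.2))) '' (Ioi 0 ×ˢ Ioo 0 1)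
      = Ioi 0 ×ˢ Ioi 0 := by
  ext ⟨x, y⟩
  simp only [mem_image, mem_prod, mem_Ioi, mem_Ioo, Prod.exists, Prod.mk.injEq]
  constructor
  · rintro ⟨s, b, ⟨hs, hb, hb1⟩, rfl, rfl⟩
    exact ⟨by positivity, mul_pos hs (sub_pos.2 hb1)⟩
  · rintro ⟨hx, hy⟩
    refine ⟨x + y, x / (x + y), ⟨by positivity, by positivity,
      (div_lt_one (by positivity)).2 (by linarith)⟩, by field_simp, by field_simp; ring⟩

lemma exists_monotone_grid {T : Type*} [LinearOrder T] (J : Finset T) {a t u r : T}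
    (hJ : ∀ x ∈ J, x ∈ Icc a t) (hat : a ≤ t) (htu : t ≤ u) (hur : u ≤ r) :
    ∃ (τ : ℕ → T) (n : ℕ), Monotone τ ∧ τ 0 = a ∧ (∀ x ∈ J, ∃ k < n, τ k = x) ∧
      τ n = t ∧ τ (n + 1) = u ∧ τ (n + 2) = r := by
  classical
  set K := insert a J
  set e := K.orderEmbOfFin rfl
  have hK : ∀ x ∈ K, x ∈ Icc a t := by
    intro x hx
    rcases Finset.mem_insert.1 hx with rfl | hx
    exacts [⟨le_rfl, hat⟩, hJ x hx]
  have he : ∀ k, e k ≤ t := fun k => (hK _ (K.orderEmbOfFin_mem rfl k)).2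
  have hn : 0 < K.card := Finset.card_pos.2 (Finset.insert_nonempty a J)
  refine ⟨fun k => if h : k < K.card then e ⟨k, h⟩ else if k = K.card then t else
    if k = K.card + 1 then u else r, K.card, monotone_nat_of_le_succ fun k => ?_, ?_,
    fun x hx => ?_, by simp, by simp, by simp⟩
  · split_ifs <;> first
      | omega
      | exact e.monotone (Fin.mk_le_mk.2 k.le_succ)
      | exact he _
      | exact htu
      | exact hur
      | exact le_rfl
  · simp only [dif_pos hn]
    rw [Finset.orderEmbOfFin_zero rfl hn]
    exact le_antisymm (Finset.min'_le _ _ (Finset.mem_insert_self a J))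
      (Finset.le_min' _ _ _ fun y hy => (hK y hy).1)
  · obtain ⟨k, hk⟩ : x ∈ Set.range e := by
      rw [Finset.range_orderEmbOfFin]; exact Finset.mem_insert_of_mem hx
    exact ⟨k, k.2, by simp [hk]⟩

namespace ProbabilityTheory

lemma gammaMeasure_eq_withDensity_restrict (a r : ℝ) :
    gammaMeasure a r = (volume.restrict (Ioi 0)).withDensity (gammaPDF a r) := by
  rw [gammaMeasure, ← withDensity_indicator measurableSet_Ioi]
  refine withDensity_congr_ae ?_
  filter_upwards [Measure.ae_ne volume 0] with x hx
  rcases hx.lt_or_gt with hneg | hpos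
  · rw [gammaPDF_of_neg hneg, indicator_of_notMem (notMem_Ioi.2 hneg.le)]
  · rw [indicator_of_mem (mem_Ioi.2 hpos)]

lemma betaMeasure_eq_withDensity_restrict (a c : ℝ) :
    betaMeasure a c = (volume.restrict (Ioo 0 1)).withDensity (betaPDF a c) := by
  rw [betaMeasure, ← withDensity_indicator measurableSet_Ioo,
    indicator_eq_self.2 (Function.support_subset_iff'.2 fun x hx => ?_)]
  rcases not_and_or.1 hx with h | h
  · exact betaPDF_eq_zero_of_nonpos (not_lt.1 h)
  · exact betaPDF_eq_zero_of_one_le (not_lt.1 h)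

lemma ofReal_mul_gammaPDF_mul_gammaPDF {a c s b : ℝ} (ha : 0 < a) (hc : 0 < c) (hs : 0 < s)
    (hb : 0 < b) (hb1 : b < 1) :
    ENNReal.ofReal s * (gammaPDF a 1 (s * b) * gammaPDF c 1 (s * (1 - b)))
      = gammaPDF (a + c) 1 s * betaPDF a c b := by
  have hb1' : 0 < 1 - b := sub_pos.2 hb1
  have := Gamma_pos_of_pos ha
  have := Gamma_pos_of_pos hc
  have := Gamma_pos_of_pos (add_pos ha hc)
  rw [gammaPDF_of_nonneg (by positivity), gammaPDF_of_nonneg (by positivity),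
    gammaPDF_of_nonneg hs.le, betaPDF_of_pos_lt_one hb hb1, ← ENNReal.ofReal_mul (by positivity),
    ← ENNReal.ofReal_mul hs.le, ← ENNReal.ofReal_mul (by positivity)]
  congr 1
  rw [mul_rpow hs.le hb.le, mul_rpow hs.le hb1'.le, rpow_sub_one hs.ne', rpow_sub_one hs.ne',
    rpow_sub_one hs.ne', rpow_add hs, beta]
  field_simp
  simp only [one_rpow, one_mul, mul_one]
  rw [← exp_add]
  ring_nf

theorem gammaMeasure_prod_map_add_div {a c : ℝ} (ha : 0 < a) (hc : 0 < c) :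
    ((gammaMeasure a 1).prod (gammaMeasure c 1)).map
        (fun p : ℝ × ℝ => (p.1 + p.2, p.1 / (p.1 + p.2)))
      = (gammaMeasure (a + c) 1).prod (betaMeasure a c) := by
  have hpdf (k : ℝ) : Measurable (gammaPDF k 1) := (measurable_gammaPDFReal k 1).ennreal_ofReal
  rw [gammaMeasure_eq_withDensity_restrict, gammaMeasure_eq_withDensity_restrict,
    gammaMeasure_eq_withDensity_restrict, betaMeasure_eq_withDensity_restrict,
    prod_withDensity (hpdf a) (hpdf c),
    prod_withDensity (hpdf (a + c))
      (show Measurable (betaPDF a c) from (measurable_betaPDFReal a c).ennreal_ofReal),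
    Measure.prod_restrict, Measure.prod_restrict, ← Measure.volume_eq_prod,
    ← image_mul_mul_one_sub, withDensity_restrict_image_map_of_leftInvOn volume
      (measurableSet_Ioi.prod measurableSet_Ioo)
      (fun p _ => (hasFDerivAt_mul_mul_one_sub p).hasFDerivWithinAt)
      (by fun_prop) leftInvOn_add_div_mul_mul_one_sub]
  refine withDensity_congr_ae ((ae_restrict_iff' (measurableSet_Ioi.prod measurableSet_Ioo)).2
    (ae_of_all _ fun ⟨s, b⟩ ⟨hs, hb, hb1⟩ => ?_))
  dsimp only
  rw [det_toLin_finTwoProd, show b * -s - s * (1 - b) = -s by ring, abs_neg, abs_of_pos hs]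
  exact ofReal_mul_gammaPDF_mul_gammaPDF ha hc hs hb hb1

lemma ae_pos_of_map_eq_gammaMeasure {Ω : Type*} [MeasurableSpace Ω] {P : Measure Ω}
    {X : Ω → ℝ} (hX : Measurable X) {a r : ℝ} (h : P.map X = gammaMeasure a r) :
    ∀ᵐ ω ∂P, 0 < X ω := by
  refine ae_of_ae_map hX.aemeasurable ?_
  rw [h, gammaMeasure_eq_withDensity_restrict]
  exact (withDensity_absolutelyContinuous _ _).ae_le (ae_restrict_mem measurableSet_Ioi)

section Independence

variable {Ω α β δ : Type*} [MeasurableSpace α] [MeasurableSpace β]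

lemma indepFun_of_map_prodMk_eq_prod {mΩ : MeasurableSpace Ω} {P : Measure Ω}
    [IsFiniteMeasure P] {X : Ω → α} {Y : Ω → β} (hX : Measurable X) (hY : Measurable Y)
    {μ : Measure α} {ν : Measure β} [IsProbabilityMeasure μ] [IsProbabilityMeasure ν]
    (h : P.map (fun ω => (X ω, Y ω)) = μ.prod ν) : IndepFun X Y P := by
  have hμ : P.map X = μ := by rw [← Measure.fst_map_prodMk hY, h, Measure.fst_prod]
  have hν : P.map Y = ν := by rw [← Measure.snd_map_prodMk hX, h, Measure.snd_prod]
  rw [indepFun_iff_map_prod_eq_prod_map_map hX.aemeasurable hY.aemeasurable, h, hμ, hν]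

theorem indepFun_add_div_of_map_eq_gammaMeasure {mΩ : MeasurableSpace Ω} {P : Measure Ω}
    [IsFiniteMeasure P] {X Y : Ω → ℝ} (hX : Measurable X) (hY : Measurable Y)
    (hXY : IndepFun X Y P) {a c : ℝ} (ha : 0 < a) (hc : 0 < c)
    (hXa : P.map X = gammaMeasure a 1) (hYc : P.map Y = gammaMeasure c 1) :
    IndepFun (fun ω => X ω + Y ω) (fun ω => X ω / (X ω + Y ω)) P := by
  have := isProbabilityMeasure_gammaMeasure (add_pos ha hc) one_pos
  have := isProbabilityMeasureBeta ha hc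
  refine indepFun_of_map_prodMk_eq_prod (μ := gammaMeasure (a + c) 1) (ν := betaMeasure a c)
    (hX.add hY) (hX.div (hX.add hY)) ?_
  rw [← gammaMeasure_prod_map_add_div ha hc, ← hXa, ← hYc,
    ← hXY.map_prod_eq_prod_map_map hX.aemeasurable hY.aemeasurable,
    Measure.map_map (by fun_prop) (hX.prodMk hY)]
  rfl

lemma IndepFun.prodMk_left [MeasurableSpace δ] {mΩ : MeasurableSpace Ω} {P : Measure Ω}
    [IsFiniteMeasure P] {X : Ω → α} {Y : Ω → β} {Z : Ω → δ}
    (hX : Measurable X) (hY : Measurable Y) (hZ : Measurable Z)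
    (hXYZ : IndepFun X (fun ω => (Y ω, Z ω)) P) (hYZ : IndepFun Y Z P) :
    IndepFun (fun ω => (X ω, Y ω)) Z P := by
  have hXY : IndepFun X Y P := hXYZ.comp measurable_id measurable_fst
  rw [indepFun_iff_map_prod_eq_prod_map_map (hX.prodMk hY).aemeasurable hZ.aemeasurable,
    hXY.map_prod_eq_prod_map_map hX.aemeasurable hY.aemeasurable,
    ← (measurePreserving_prodAssoc (P.map X) (P.map Y) (P.map Z)).symm.map_eq,
    ← hYZ.map_prod_eq_prod_map_map hY.aemeasurable hZ.aemeasurable,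
    ← hXYZ.map_prod_eq_prod_map_map hX.aemeasurable (hY.prodMk hZ).aemeasurable,
    Measure.map_map MeasurableEquiv.prodAssoc.symm.measurable (hX.prodMk (hY.prodMk hZ))]
  rfl

lemma map_restrict_prodMk_eq_prod_of_indep {m mΩ : MeasurableSpace Ω} {P : Measure Ω}
    [IsFiniteMeasure P] (hm : m ≤ mΩ) {X : Ω → α} {Y : Ω → β} (hX : Measurable[m] X)
    (hY : Measurable Y) (hXY : Indep m (MeasurableSpace.comap Y inferInstance) P) {A : Set Ω}
    (hA : MeasurableSet[m] A) :
    (P.restrict A).map (fun ω => (X ω, Y ω)) = ((P.restrict A).map X).prod (P.map Y) := by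
  have hX' : Measurable X := hX.mono hm le_rfl
  refine (Measure.prod_eq fun s t hs ht => ?_).symm
  rw [Measure.map_apply (hX'.prodMk hY) (hs.prod ht), Measure.map_apply hX' hs,
    Measure.map_apply hY ht, Measure.restrict_apply (hX'.prodMk hY (hs.prod ht)),
    Measure.restrict_apply (hX' hs), mk_preimage_prod, inter_right_comm]
  exact (hXY.indepSet_of_measurableSet ((hX hs).inter hA) ⟨t, ht, rfl⟩).measure_inter_eq_mul

theorem condExp_comp_prodMk_ae_eq_integral_of_indep {m mΩ : MeasurableSpace Ω} {P : Measure Ω}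
    [IsFiniteMeasure P] (hm : m ≤ mΩ) {X : Ω → α} {Y : Ω → β} (hX : Measurable[m] X)
    (hY : Measurable Y) (hXY : Indep m (MeasurableSpace.comap Y inferInstance) P)
    {f : α × β → ℝ} (hf : StronglyMeasurable f) (hfi : Integrable (fun ω => f (X ω, Y ω)) P) :
    P[fun ω => f (X ω, Y ω) | m] =ᵐ[P] fun ω => ∫ y, f (X ω, y) ∂(P.map Y) := by
  have hX' : Measurable X := hX.mono hm le_rfl
  have hlaw {A : Set Ω} (hA : MeasurableSet[m] A) :=
    map_restrict_prodMk_eq_prod_of_indep hm hX hY hXY hA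
  have hfA {A : Set Ω} (hA : MeasurableSet[m] A) :
      Integrable f (((P.restrict A).map X).prod (P.map Y)) := by
    rw [← hlaw hA, integrable_map_measure hf.aestronglyMeasurable (hX'.prodMk hY).aemeasurable]
    exact hfi.integrableOn
  have hH : Integrable (fun x => ∫ y, f (x, y) ∂(P.map Y)) (P.map X) := by
    simpa using (hfA MeasurableSet.univ).integral_prod_left
  have hHX : Integrable (fun ω => ∫ y, f (X ω, y) ∂(P.map Y)) P :=
    (integrable_map_measure hf.integral_prod_right'.aestronglyMeasurable hX'.aemeasurable).1 hH
  refine (ae_eq_condExp_of_forall_setIntegral_eq hm hfi (fun _ _ _ => hHX.integrableOn)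
    (fun A hA _ => ?_)
    (hf.integral_prod_right'.comp_measurable hX).aestronglyMeasurable).symm
  calc ∫ ω in A, ∫ y, f (X ω, y) ∂(P.map Y) ∂P
      = ∫ x, ∫ y, f (x, y) ∂(P.map Y) ∂((P.restrict A).map X) :=
        (integral_map hX'.aemeasurable hf.integral_prod_right'.aestronglyMeasurable).symm
    _ = ∫ p, f p ∂((P.restrict A).map (fun ω => (X ω, Y ω))) := by
        rw [hlaw hA, integral_prod f (hfA hA)]
    _ = ∫ ω in A, f (X ω, Y ω) ∂P :=
        integral_map (hX'.prodMk hY).aemeasurable hf.aestronglyMeasurable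

theorem condExp_comp_prodMk_ae_eq_of_indep_of_le {m₁ m₂ mΩ : MeasurableSpace Ω} {P : Measure Ω}
    [IsFiniteMeasure P] (h₂₁ : m₂ ≤ m₁) (h₁ : m₁ ≤ mΩ) {X : Ω → α} {Y : Ω → β}
    (hX : Measurable[m₂] X) (hY : Measurable Y) (hXY : Indep m₁ (MeasurableSpace.comap Y inferInstance) P)
    {f : α × β → ℝ} (hf : StronglyMeasurable f) (hfi : Integrable (fun ω => f (X ω, Y ω)) P) :
    P[fun ω => f (X ω, Y ω) | m₁] =ᵐ[P] P[fun ω => f (X ω, Y ω) | m₂] :=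
  (condExp_comp_prodMk_ae_eq_integral_of_indep h₁ (hX.mono h₂₁ le_rfl) hY hXY hf hfi).trans
    (condExp_comp_prodMk_ae_eq_integral_of_indep (h₂₁.trans h₁) hX hY
      (indep_of_indep_of_le_left hXY h₂₁) hf hfi).symm

end Independence

lemma HasIndepIncrements.indepFun_sub_finset {T Ω E : Type*} [LinearOrder T]
    [MeasurableSpace Ω] {P : Measure Ω} [AddCommGroup E] [MeasurableSpace E] [MeasurableAdd₂ E]
    [MeasurableSub₂ E] {X : T → Ω → E} (hX : HasIndepIncrements X P)
    (hXm : ∀ t, Measurable (X t)) {a t u r : T} (hat : a ≤ t) (htu : t ≤ u) (hur : u ≤ r)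
    (I : Finset (Icc a t)) :
    IndepFun (fun ω (i : I) => X i ω - X a ω) (fun ω => (X u ω - X t ω, X r ω - X u ω)) P := by
  obtain ⟨τ, n, hτ, hτ0, hτI, hτn, hτn1, hτn2⟩ :=
    exists_monotone_grid (I.map (Function.Embedding.subtype _))
      (fun x hx => by obtain ⟨y, -, rfl⟩ := Finset.mem_map.1 hx; exact y.2) hat htu hur
  set D : ℕ → Ω → E := fun k ω => X (τ (k + 1)) ω - X (τ k) ω
  have hD : ∀ k, Measurable (D k) := fun k => (hXm _).sub (hXm _)
  have hdisj : Disjoint (Iio n) {n, n + 1} := by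
    simp only [Set.disjoint_left, mem_Iio, mem_insert_iff, mem_singleton_iff]
    omega
  have hind := indep_iSup_of_disjoint (fun k => (hD k).comap_le)
    ((iIndepFun_iff_iIndep _ _ _).1 (hX.nat hτ)) hdisj
  have hDle {S : Set ℕ} {k : ℕ} (hk : k ∈ S) :
      Measurable[⨆ j ∈ S, MeasurableSpace.comap (D j) inferInstance] (D k) :=
    (comap_measurable (D k)).mono (le_iSup₂_of_le k hk le_rfl) le_rfl
  rw [IndepFun_iff_Indep]
  refine indep_of_indep_of_le_right (indep_of_indep_of_le_left hind ?_) ?_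
  · refine Measurable.comap_le (@measurable_pi_lambda _ _ _ (⨆ j ∈ Iio n, _) _ _ fun i => ?_)
    obtain ⟨k, hkn, hk⟩ := hτI i (Finset.mem_map_of_mem _ i.2)
    have hsum : (fun ω => X i ω - X a ω) = fun ω => ∑ j ∈ Finset.range k, D j ω := by
      ext ω
      rw [Finset.sum_range_sub (fun j => X (τ j) ω), hk, hτ0]
    rw [hsum]
    exact Finset.measurable_sum (m := ⨆ j ∈ Iio n, _) _
      fun j hj => hDle (mem_Iio.2 ((Finset.mem_range.1 hj).trans hkn))
  · have hfut : (fun ω => (X u ω - X t ω, X r ω - X u ω)) = fun ω => (D n ω, D (n + 1) ω) := by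
      simp only [D, hτn, hτn1, hτn2]
    rw [hfut]
    exact ((hDle (by simp)).prodMk (hDle (by simp))).comap_le

lemma HasIndepIncrements.indepFun_sub_Icc {T Ω E : Type*} [LinearOrder T]
    [MeasurableSpace Ω] {P : Measure Ω} [IsZeroOrProbabilityMeasure P] [AddCommGroup E]
    [MeasurableSpace E] [MeasurableAdd₂ E] [MeasurableSub₂ E] {X : T → Ω → E}
    (hX : HasIndepIncrements X P) (hXm : ∀ t, Measurable (X t)) {a t u r : T} (hat : a ≤ t)
    (htu : t ≤ u) (hur : u ≤ r) :
    IndepFun (fun ω (i : Icc a t) => X i ω - X a ω)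
      (fun ω => (X u ω - X t ω, X r ω - X u ω)) P :=
  IndepFun.process_indepFun (fun i => (hXm i).sub (hXm a))
    (((hXm u).sub (hXm t)).prodMk ((hXm r).sub (hXm u)))
    (hX.indepFun_sub_finset hXm hat htu hur)

end ProbabilityTheory

def gammaBridge {Ω : Type*} (γ : ℝ → Ω → ℝ) (r : ℝ) : ℝ → Ω → ℝ :=
  fun s ω => γ (min s r) ω / γ r ω

namespace IsStdGammaProcess

variable {Ω : Type*} [MeasurableSpace Ω] {P : Measure Ω} {γ : ℝ → Ω → ℝ}

lemma measurable_gammaBridge (hγ : IsStdGammaProcess P γ) (r s : ℝ) :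
    Measurable (gammaBridge γ r s) :=
  (hγ.measurable _).div (hγ.measurable r)

lemma ae_sub_pos (hγ : IsStdGammaProcess P γ) {s t : ℝ} (hs : 0 ≤ s) (hst : s < t) :
    ∀ᵐ ω ∂P, 0 < γ t ω - γ s ω :=
  ae_pos_of_map_eq_gammaMeasure ((hγ.measurable t).sub (hγ.measurable s)) (hγ.incr_law s t hs hst)

lemma ae_pos (hγ : IsStdGammaProcess P γ) {t : ℝ} (ht : 0 < t) : ∀ᵐ ω ∂P, 0 < γ t ω := by
  filter_upwards [hγ.ae_sub_pos le_rfl ht, hγ.zero] with ω h h0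
  rwa [h0, sub_zero] at h

lemma hasIndepIncrements (hγ : IsStdGammaProcess P γ) :
    HasIndepIncrements (fun t : ℝ≥0 => γ t) P :=
  fun n t ht => hγ.indep_incr n (fun i => t i) (fun _ _ h => ht h) (fun i => (t i).2)

lemma gammaBridge_ae_eq_add_mul (hγ : IsStdGammaProcess P γ) {r t u : ℝ} (ht : 0 ≤ t)
    (htu : t < u) (hur : u ≤ r) :
    gammaBridge γ r u =ᵐ[P] fun ω => gammaBridge γ r t ω
      + (1 - gammaBridge γ r t ω) * ((γ u ω - γ t ω) / (γ r ω - γ t ω)) := by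
  have htr := htu.trans_le hur
  filter_upwards [hγ.ae_pos (ht.trans_lt htr), hγ.ae_sub_pos ht htr] with ω h₁ h₂
  rw [gammaBridge, gammaBridge, min_eq_left hur, min_eq_left htr.le]
  field_simp
  ring

theorem indep_gammaBridge_past (hγ : IsStdGammaProcess P γ) [IsProbabilityMeasure P]
    {r t u : ℝ} (ht : 0 ≤ t) (htu : t < u) (hur : u < r) :
    Indep (⨆ s ∈ Icc 0 t, MeasurableSpace.comap (gammaBridge γ r s) inferInstance)
      (MeasurableSpace.comap (fun ω => (γ u ω - γ t ω) / (γ r ω - γ t ω)) inferInstance) P := by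
  have hm := hγ.measurable
  lift t to ℝ≥0 using ht
  lift u to ℝ≥0 using t.2.trans htu.le
  lift r to ℝ≥0 using u.2.trans hur.le
  have htu' : t ≤ u := by exact_mod_cast htu.le
  have hur' : u ≤ r := by exact_mod_cast hur.le
  set W : Ω → ℝ := fun ω => γ u ω - γ t ω
  set Z : Ω → ℝ := fun ω => γ r ω - γ u ω
  have hW : Measurable W := (hm u).sub (hm t)
  have hZ : Measurable Z := (hm r).sub (hm u)
  have hV := hγ.hasIndepIncrements.indepFun_sub_Icc (fun s => hm s) (zero_le : 0 ≤ t) htu' hur'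
  have hS : IndepFun (fun ω => W ω + Z ω) (fun ω => W ω / (W ω + Z ω)) P :=
    indepFun_add_div_of_map_eq_gammaMeasure hW hZ
      (hγ.hasIndepIncrements.indepFun_sub_sub htu' hur') (sub_pos.2 htu) (sub_pos.2 hur)
      (hγ.incr_law t u t.2 htu) (hγ.incr_law u r u.2 hur)
  have hVS := IndepFun.prodMk_left (measurable_pi_lambda _ fun i => (hm _).sub (hm _))
    (hW.add hZ) (hW.div (hW.add hZ))
    (hV.comp (ψ := fun p : ℝ × ℝ => (p.1 + p.2, p.1 / (p.1 + p.2))) measurable_id (by fun_prop)) hS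
  set tₘ : Icc 0 t := ⟨t, right_mem_Icc.2 zero_le⟩
  have hζ : IndepFun (fun ω (i : Icc 0 t) => gammaBridge γ r i ω)
      (fun ω => (γ u ω - γ t ω) / (γ r ω - γ t ω)) P := by
    refine (hVS.comp (φ := fun p i => p.1 i / (p.1 tₘ + p.2)) (by fun_prop)
      measurable_id).congr ?_ (ae_of_all _ fun ω => ?_)
    · filter_upwards [hγ.zero] with ω h0
      funext i
      have hir : (i : ℝ) ≤ r := by exact_mod_cast i.2.2.trans (htu'.trans hur')
      simp only [Function.comp_apply, Pi.add_apply, Pi.sub_apply, gammaBridge, NNReal.coe_zero,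
        h0, sub_zero, W, Z, min_eq_left hir]
      congr 1
      ring
    · simp only [Function.comp_apply, Pi.add_apply, Pi.div_apply, id, W, Z]
      congr 1
      ring
  rw [IndepFun_iff_Indep] at hζ
  refine indep_of_indep_of_le_left hζ (iSup₂_le fun s hs => ?_)
  lift s to ℝ≥0 using hs.1
  exact Measurable.comap_le (f := gammaBridge γ r s) ((measurable_pi_apply
    (⟨s, zero_le, by exact_mod_cast hs.2⟩ : Icc 0 t)).comp
      (comap_measurable fun ω (i : Icc 0 t) => gammaBridge γ r i ω))

end IsStdGammaProcess

theorem gamma_bridge_markov_general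
    {Ω : Type*} [MeasurableSpace Ω] (P : Measure Ω) [IsProbabilityMeasure P]
    (γ : ℝ → Ω → ℝ) (hγ : IsStdGammaProcess P γ) (r : ℝ)
    (ζ : ℝ → Ω → ℝ) (hζ : ∀ s ω, ζ s ω = γ (min s r) ω / γ r ω)
    (g : ℝ → ℝ) (hg : Measurable g) (C : ℝ) (hbd : ∀ x, |g x| ≤ C)
    (t u : ℝ) (ht : 0 ≤ t) (htu : t < u) (hur : u ≤ r) :
    P[fun ω => g (ζ u ω) | ⨆ s ∈ Set.Icc (0 : ℝ) t, MeasurableSpace.comap (ζ s) inferInstance]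
      =ᵐ[P] P[fun ω => g (ζ u ω) | MeasurableSpace.comap (ζ t) inferInstance] := by
  obtain rfl : ζ = gammaBridge γ r := funext₂ hζ
  obtain ⟨Y, hY, hind, hrepr⟩ : ∃ Y : Ω → ℝ, Measurable Y ∧
      Indep (⨆ s ∈ Icc 0 t, MeasurableSpace.comap (gammaBridge γ r s) inferInstance)
        (MeasurableSpace.comap Y inferInstance) P ∧
      (fun ω => g (gammaBridge γ r u ω))
        =ᵐ[P] fun ω => g (gammaBridge γ r t ω + (1 - gammaBridge γ r t ω) * Y ω) := by
    rcases hur.lt_or_eq with hur | rfl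
    · exact ⟨_, ((hγ.measurable u).sub (hγ.measurable t)).div
        ((hγ.measurable r).sub (hγ.measurable t)), hγ.indep_gammaBridge_past ht htu hur,
        (hγ.gammaBridge_ae_eq_add_mul ht htu hur.le).fun_comp g⟩
    · refine ⟨fun _ => 1, measurable_const, by
        simpa only [MeasurableSpace.comap_const] using indep_bot_right _, ?_⟩
      filter_upwards [hγ.ae_pos (ht.trans_lt htu)] with ω hω
      simp [gammaBridge, hω.ne']
  refine (condExp_congr_ae hrepr).trans ((condExp_comp_prodMk_ae_eq_of_indep_of_le
    (f := fun p : ℝ × ℝ => g (p.1 + (1 - p.1) * p.2)) (le_iSup₂_of_le t ⟨ht, le_rfl⟩ le_rfl)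
    (iSup₂_le fun s _ => (hγ.measurable_gammaBridge r s).comap_le) (comap_measurable _) hY hind
    (by fun_prop) ?_).trans (condExp_congr_ae hrepr.symm))
  have := hγ.measurable_gammaBridge r t
  exact .of_bound (Measurable.aestronglyMeasurable (by fun_prop)) C (ae_of_all _ fun ω => hbd _)

/-- For every `r > 0`, the gamma bridge `ζ^r` is a Markov process with respect to
its natural filtration: for bounded measurable `g` and `0 ≤ t < u ≤ r`,
`E[g(ζ^r_u) | σ(ζ^r_s, s ≤ t)] = E[g(ζ^r_u) | σ(ζ^r_t)]` `P`-a.s. -/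
theorem gamma_bridge_markov
    {Ω : Type*} [MeasurableSpace Ω] (P : Measure Ω) [IsProbabilityMeasure P]
    (γ : ℝ → Ω → ℝ) (hγ : IsStdGammaProcess P γ) (r : ℝ) (hr : 0 < r)
    (ζ : ℝ → Ω → ℝ) (hζ : ∀ s ω, ζ s ω = γ (min s r) ω / γ r ω)
    (g : ℝ → ℝ) (hg : Measurable g) (C : ℝ) (hbd : ∀ x, |g x| ≤ C)
    (t u : ℝ) (ht : 0 ≤ t) (htu : t < u) (hur : u ≤ r) :
    P[fun ω => g (ζ u ω) | ⨆ s ∈ Set.Icc (0 : ℝ) t, MeasurableSpace.comap (ζ s) inferInstance]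
      =ᵐ[P] P[fun ω => g (ζ u ω) | MeasurableSpace.comap (ζ t) inferInstance] :=
  gamma_bridge_markov_general P γ hγ r ζ hζ g hg C hbd t u ht htu hur
end
end
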